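/- arXiv:1903.10874 — 4 statements merged into one kernel-verified Lean document; each statement's English description precedes it below -/
import Mathlib

section
/- Given finitely many n-independent sets X₁,…,X_m ⊆ ℝ², each of cardinality less than N = (n+1)(n+2)/2, a point A ∈ ℝ², and ε > 0, there exists a point A' with dist(A, A') < ε such that for every i the set X_i ∪ {A'} is n-independent. -/
open MvPolynomial
open scoped Classical

/-- Evaluation of a bivariate polynomial at a point of the plane. -/
noncomputable def evalPt (p : MvPolynomial (Fin 2) ℝ) (A : ℝ × ℝ) : ℝ :=
  MvPolynomial.eval ![A.1, A.2] p

/-- `p` is an `n`-fundamental polynomial of the node `A` with respect to the node set `X`. -/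
def IsFund (n : ℕ) (X : Finset (ℝ × ℝ)) (A : ℝ × ℝ)
    (p : MvPolynomial (Fin 2) ℝ) : Prop :=
  p.totalDegree ≤ n ∧ evalPt p A = 1 ∧ ∀ B ∈ X, B ≠ A → evalPt p B = 0

/-- The node set `X` is `n`-independent. -/
def Indep (n : ℕ) (X : Finset (ℝ × ℝ)) : Prop :=
  ∀ A ∈ X, ∃ p, IsFund n X A p

/-- `d(n,k) = N_n - N_{n-k} = k(2n+3-k)/2`. -/
def dd (n k : ℕ) : ℕ := k * (2 * n + 3 - k) / 2

/-- The node set `X` is `n`-poised. -/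
def Poised (n : ℕ) (X : Finset (ℝ × ℝ)) : Prop :=
  X.card = (n + 1) * (n + 2) / 2 ∧
  ∀ p : MvPolynomial (Fin 2) ℝ, p.totalDegree ≤ n →
    (∀ A ∈ X, evalPt p A = 0) → p = 0

/-- The space of polynomials of total degree at most `n` vanishing on `X`. -/
noncomputable def vanishSp (n : ℕ) (X : Finset (ℝ × ℝ)) :
    Submodule ℝ (MvPolynomial (Fin 2) ℝ) :=
  MvPolynomial.restrictTotalDegree (Fin 2) ℝ n ⊓
    ⨅ A ∈ X, LinearMap.ker ((MvPolynomial.aeval (R := ℝ) ![A.1, A.2]).toLinearMap)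

/-!
If `#X < N = dim Π_n`, a dimension count gives a nonzero `p ∈ Π_n` vanishing on `X`. At any
point `A'` with `p A' ≠ 0`, a multiple of `p` is the fundamental polynomial of `A'` in
`insert A' X`, and subtracting multiples of `p` turns the fundamental polynomials of the nodes of
`X` into ones for `insert A' X`. Taking the product of such polynomials over all `X_i` gives a
nonzero polynomial; being analytic, it cannot vanish on a ball, so a suitable `A'` exists in
every neighbourhood of `A`.
-/

open Finset

lemma LinearIndependent.exists_mem_span_ne_zero_map_eq_zero {K M ι κ : Type*} [Field K]
    [AddCommGroup M] [Module K M] [Fintype ι] [Fintype κ] {v : κ → M}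
    (hv : LinearIndependent K v) (f : M →ₗ[K] ι → K) (hcard : Fintype.card ι < Fintype.card κ) :
    ∃ p ∈ Submodule.span K (Set.range v), p ≠ 0 ∧ f p = 0 := by
  by_contra! h
  have hfv : LinearIndependent K (f ∘ v) :=
    hv.map <| Submodule.disjoint_def.mpr fun p hp hker => by_contra fun hp0 => h p hp hp0 hker
  have := hfv.fintype_card_le_finrank
  rw [Module.finrank_fintype_fun_eq_card] at this
  omega

lemma evalPt_sub (p q : MvPolynomial (Fin 2) ℝ) (B : ℝ × ℝ) :
    evalPt (p - q) B = evalPt p B - evalPt q B := by simp [evalPt]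

lemma evalPt_smul (c : ℝ) (p : MvPolynomial (Fin 2) ℝ) (B : ℝ × ℝ) :
    evalPt (c • p) B = c * evalPt p B := by simp [evalPt, smul_eval]

lemma evalPt_prod {ι : Type*} (s : Finset ι) (p : ι → MvPolynomial (Fin 2) ℝ) (B : ℝ × ℝ) :
    evalPt (∏ i ∈ s, p i) B = ∏ i ∈ s, evalPt (p i) B := by simp [evalPt]

def expPairsLE (n : ℕ) : Finset (ℕ × ℕ) :=
  (range (n + 1)).biUnion antidiagonal

lemma mem_expPairsLE {n : ℕ} {q : ℕ × ℕ} : q ∈ expPairsLE n ↔ q.1 + q.2 ≤ n := by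
  simp only [expPairsLE, mem_biUnion, mem_range, HasAntidiagonal.mem_antidiagonal]
  exact ⟨fun ⟨k, hk, hq⟩ => by omega, fun h => ⟨q.1 + q.2, by omega, rfl⟩⟩

lemma card_expPairsLE (n : ℕ) : #(expPairsLE n) = (n + 1) * (n + 2) / 2 := by
  have hdisj : (range (n + 1) : Set ℕ).PairwiseDisjoint antidiagonal := fun k _ l _ hkl =>
    disjoint_left.mpr fun q hk hl => hkl <| by
      rw [HasAntidiagonal.mem_antidiagonal] at hk hl
      omega
  calc #(expPairsLE n) = ∑ k ∈ range (n + 1), (k + 1) := by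
        rw [expPairsLE, card_biUnion hdisj]
        exact sum_congr rfl fun k _ => Nat.card_antidiagonal k
    _ = ∑ k ∈ range (n + 2), k := (sum_range_succ' (fun k => k) (n + 1)).symm
    _ = (n + 1) * (n + 2) / 2 := by rw [sum_range_id, show n + 2 - 1 = n + 1 by omega, mul_comm]

noncomputable def bivariateMonomial (q : ℕ × ℕ) : MvPolynomial (Fin 2) ℝ :=
  monomial (Finsupp.single 0 q.1 + Finsupp.single 1 q.2) 1

lemma totalDegree_bivariateMonomial (q : ℕ × ℕ) :
    (bivariateMonomial q).totalDegree = q.1 + q.2 := by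
  rw [bivariateMonomial, totalDegree_monomial _ one_ne_zero,
    Finsupp.sum_add_index (by simp) (by simp)]
  simp

lemma linearIndependent_bivariateMonomial : LinearIndependent ℝ bivariateMonomial := by
  have hinj : Function.Injective
      fun q : ℕ × ℕ => Finsupp.single (0 : Fin 2) q.1 + Finsupp.single 1 q.2 := by
    intro a b h
    have h0 := DFunLike.congr_fun h 0
    have h1 := DFunLike.congr_fun h 1
    simp only [Finsupp.add_apply, Finsupp.single_apply] at h0 h1
    exact Prod.ext (by simpa using h0) (by simpa using h1)
  have hb := (basisMonomials (Fin 2) ℝ).linearIndependent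
  rw [coe_basisMonomials] at hb
  exact hb.comp _ hinj

lemma exists_ne_zero_totalDegree_le_evalPt_eq_zero {n : ℕ} {X : Finset (ℝ × ℝ)}
    (hX : #X < (n + 1) * (n + 2) / 2) :
    ∃ p : MvPolynomial (Fin 2) ℝ, p ≠ 0 ∧ p.totalDegree ≤ n ∧ ∀ B ∈ X, evalPt p B = 0 := by
  let evalOn : MvPolynomial (Fin 2) ℝ →ₗ[ℝ] X → ℝ :=
    LinearMap.pi fun B => (aeval ![B.1.1, B.1.2]).toLinearMap
  have hli : LinearIndependent ℝ fun q : expPairsLE n => bivariateMonomial q :=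
    linearIndependent_bivariateMonomial.comp _ Subtype.val_injective
  obtain ⟨p, hspan, hp0, hp⟩ :=
    hli.exists_mem_span_ne_zero_map_eq_zero evalOn (by simpa [card_expPairsLE] using hX)
  have hspan_le : Submodule.span ℝ (Set.range fun q : expPairsLE n => bivariateMonomial q) ≤
      restrictTotalDegree (Fin 2) ℝ n := by
    rw [Submodule.span_le]
    rintro _ ⟨q, rfl⟩
    rw [SetLike.mem_coe, mem_restrictTotalDegree, totalDegree_bivariateMonomial]
    exact mem_expPairsLE.mp q.2
  exact ⟨p, hp0, (mem_restrictTotalDegree _ _ _).mp (hspan_le hspan),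
    fun B hB => congrFun hp ⟨B, hB⟩⟩

lemma analyticOnNhd_evalPt (p : MvPolynomial (Fin 2) ℝ) :
    AnalyticOnNhd ℝ (evalPt p) Set.univ := fun A _ =>
  AnalyticAt.aeval_mvPolynomial (f := fun B : ℝ × ℝ => ![B.1, B.2])
    (fun i => by fin_cases i <;> [exact analyticAt_fst; exact analyticAt_snd]) p

lemma dense_evalPt_ne_zero {p : MvPolynomial (Fin 2) ℝ} (hp : p ≠ 0) :
    Dense {A | evalPt p A ≠ 0} := by
  rw [← Set.compl_ofPred, ← interior_eq_empty_iff_dense_compl, Set.eq_empty_iff_forall_notMem]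
  intro A hA
  have hzero : Set.EqOn (evalPt p) 0 Set.univ :=
    (analyticOnNhd_evalPt p).eqOn_zero_of_preconnected_of_eventuallyEq_zero
      isPreconnected_univ (Set.mem_univ A)
      (Filter.mem_of_superset (isOpen_interior.mem_nhds hA) fun B hB => interior_subset hB)
  refine hp (MvPolynomial.funext fun x => ?_)
  have hx : ![x 0, x 1] = x := by ext i; fin_cases i <;> rfl
  simpa [evalPt, hx] using hzero (Set.mem_univ (x 0, x 1))

lemma Indep.insert_of_evalPt_ne_zero {n : ℕ} {X : Finset (ℝ × ℝ)} (hX : Indep n X)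
    {p : MvPolynomial (Fin 2) ℝ} (hd : p.totalDegree ≤ n) (hv : ∀ B ∈ X, evalPt p B = 0)
    {A : ℝ × ℝ} (hA : evalPt p A ≠ 0) :
    Indep n (insert A X) := by
  have hdeg : ∀ c : ℝ, (c • p).totalDegree ≤ n := fun c => (totalDegree_smul_le _ _).trans hd
  intro B hB
  by_cases hBA : B = A
  · subst hBA
    refine ⟨(evalPt p B)⁻¹ • p, hdeg _, by rw [evalPt_smul, inv_mul_cancel₀ hA], ?_⟩
    intro C hC hCB
    rw [evalPt_smul, hv C ((mem_insert.mp hC).resolve_left hCB), mul_zero]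
  · obtain ⟨f, hfd, hf1, hf0⟩ := hX B ((mem_insert.mp hB).resolve_left hBA)
    refine ⟨f - (evalPt f A / evalPt p A) • p,
      (totalDegree_sub _ _).trans (max_le hfd (hdeg _)), ?_, ?_⟩
    · rw [evalPt_sub, evalPt_smul, hf1, hv B ((mem_insert.mp hB).resolve_left hBA), mul_zero,
        sub_zero]
    · intro C hC hCB
      by_cases hCA : C = A
      · rw [hCA, evalPt_sub, evalPt_smul, div_mul_cancel₀ _ hA, sub_self]
      · have hCX := (mem_insert.mp hC).resolve_left hCA
        rw [evalPt_sub, evalPt_smul, hf0 C hCX hCB, hv C hCX, mul_zero, sub_zero]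

theorem stmt3 (n m : ℕ) (X : Fin m → Finset (ℝ × ℝ))
    (hX : ∀ i, Indep n (X i))
    (hcard : ∀ i, (X i).card < (n + 1) * (n + 2) / 2)
    (A : ℝ × ℝ) (ε : ℝ) (hε : 0 < ε) :
    ∃ A' : ℝ × ℝ, dist A A' < ε ∧ ∀ i, Indep n (insert A' (X i)) := by
  choose p hp0 hpd hpv using fun i => exists_ne_zero_totalDegree_le_evalPt_eq_zero (hcard i)
  have hprod : ∏ i, p i ≠ 0 := prod_ne_zero_iff.mpr fun i _ => hp0 i
  obtain ⟨A', hA', hdist⟩ := (dense_evalPt_ne_zero hprod).exists_dist_lt A hε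
  refine ⟨A', hdist, fun i => (hX i).insert_of_evalPt_ne_zero (hpd i) (hpv i) ?_⟩
  rw [Set.mem_ofPred_eq, evalPt_prod] at hA'
  exact prod_ne_zero_iff.mp hA' i (mem_univ i)
end

section
/- Let q be a bivariate polynomial of degree k ≤ n defining an algebraic curve without multiple components (i.e., q is squarefree). Then any subset of the zero set of q containing more than d(n,k) = N_n − N_{n−k} points is n-dependent. -/
open MvPolynomial
open scoped Classical

/-!
Write `N_m = (m + 2).choose 2 = dim Π_m`. If `X` is `n`-independent, its fundamental polynomials
show that evaluation `Π_n → ℝ^X` is onto, so `#X + dim (vanishSp n X) = N_n`. Every `q * r` with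
`r ∈ Π_{n-k}` lies in `vanishSp n X`, and multiplication by `q ≠ 0` is injective, so this space has
dimension at least `N_{n-k}`; hence `#X ≤ N_n - N_{n-k} = d(n,k)`.
-/

open Finset Module

lemma card_filter_add_le_eq_choose_two (m : ℕ) :
    #{p ∈ range (m + 1) ×ˢ range (m + 1) | p.1 + p.2 ≤ m} = (m + 2).choose 2 := by
  induction m with
  | zero => rfl
  | succ m ih =>
    have hsplit : {p ∈ range (m + 2) ×ˢ range (m + 2) | p.1 + p.2 ≤ m + 1} =
        {p ∈ range (m + 1) ×ˢ range (m + 1) | p.1 + p.2 ≤ m} ∪ antidiagonal (m + 1) := by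
      ext ⟨a, b⟩; simp only [mem_filter, mem_product, mem_range, mem_union,
        HasAntidiagonal.mem_antidiagonal]; omega
    have hdisj : Disjoint {p ∈ range (m + 1) ×ˢ range (m + 1) | p.1 + p.2 ≤ m}
        (antidiagonal (m + 1)) := by
      rw [disjoint_left]
      rintro ⟨a, b⟩
      simp only [mem_filter, HasAntidiagonal.mem_antidiagonal]
      omega
    rw [hsplit, card_union_of_disjoint hdisj, ih, Nat.card_antidiagonal,
      Nat.choose_succ_succ' (m + 2) 1, Nat.choose_one_right, add_comm]

lemma finrank_restrictTotalDegree_fin_two (R : Type*) [CommSemiring R] [StrongRankCondition R]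
    (m : ℕ) : finrank R (restrictTotalDegree (Fin 2) R m) = (m + 2).choose 2 := by
  let e : {d : Fin 2 →₀ ℕ | (d.sum fun _ e => e) ≤ m} ≃
      {p ∈ range (m + 1) ×ˢ range (m + 1) | p.1 + p.2 ≤ m} :=
    (Finsupp.equivFunOnFinite.trans (finTwoArrowEquiv ℕ)).subtypeEquiv fun d => by
      simp [Finsupp.sum_fintype, Fin.sum_univ_two]; omega
  have b : Basis {d : Fin 2 →₀ ℕ | (d.sum fun _ e => e) ≤ m} R
      (restrictTotalDegree (Fin 2) R m) :=
    basisRestrictSupport R _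
  rw [finrank_eq_nat_card_basis b, Nat.card_congr e,
    Nat.card_eq_fintype_card, Fintype.card_coe, card_filter_add_le_eq_choose_two]

lemma dd_add_choose_two {n k : ℕ} (hk : k ≤ n) :
    dd n k + (n - k + 2).choose 2 = (n + 2).choose 2 := by
  obtain ⟨m, rfl⟩ := Nat.exists_eq_add_of_le hk
  have h : k * (2 * (k + m) + 3 - k) + (m + 2) * (m + 2 - 1) = (k + m + 2) * (k + m + 2 - 1) := by
    rw [show 2 * (k + m) + 3 - k = k + 2 * m + 3 by omega, show m + 2 - 1 = m + 1 by omega,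
      show k + m + 2 - 1 = k + m + 1 by omega]; ring
  rw [dd, Nat.choose_two_right, Nat.choose_two_right, Nat.add_sub_cancel_left,
    ← Nat.add_div_of_dvd_left (Nat.even_mul_pred_self _).two_dvd, h]

noncomputable def evalOn (X : Finset (ℝ × ℝ)) : MvPolynomial (Fin 2) ℝ →ₗ[ℝ] (X → ℝ) :=
  LinearMap.pi fun A => (aeval ![A.1.1, A.1.2]).toLinearMap

@[simp]
lemma evalOn_apply (X : Finset (ℝ × ℝ)) (p : MvPolynomial (Fin 2) ℝ) (A : X) :
    evalOn X p A = evalPt p A := rfl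

lemma mem_vanishSp {n : ℕ} {X : Finset (ℝ × ℝ)} {p : MvPolynomial (Fin 2) ℝ} :
    p ∈ vanishSp n X ↔ p.totalDegree ≤ n ∧ ∀ A ∈ X, evalPt p A = 0 := by
  simp [vanishSp, Submodule.mem_iInf, mem_restrictTotalDegree, evalPt]

lemma vanishSp_eq_inf_ker (n : ℕ) (X : Finset (ℝ × ℝ)) :
    vanishSp n X = restrictTotalDegree (Fin 2) ℝ n ⊓ LinearMap.ker (evalOn X) := by
  ext p
  simp [mem_vanishSp, mem_restrictTotalDegree, funext_iff]

lemma IsFund.evalOn_eq {n : ℕ} {X : Finset (ℝ × ℝ)} {A : ℝ × ℝ} {p : MvPolynomial (Fin 2) ℝ}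
    (hp : IsFund n X A p) (hA : A ∈ X) : evalOn X p = Pi.single ⟨A, hA⟩ 1 := by
  funext B
  by_cases hB : B = ⟨A, hA⟩
  · subst hB; simpa using hp.2.1
  · rw [Pi.single_eq_of_ne hB, evalOn_apply]
    exact hp.2.2 B B.2 fun h => hB (Subtype.ext h)

lemma Indep.map_evalOn_eq_top {n : ℕ} {X : Finset (ℝ × ℝ)} (hX : Indep n X) :
    (restrictTotalDegree (Fin 2) ℝ n).map (evalOn X) = ⊤ := by
  rw [eq_top_iff, ← (Pi.basisFun ℝ X).span_eq, Submodule.span_le, Set.range_subset_iff]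
  rintro ⟨A, hA⟩
  obtain ⟨p, hp⟩ := hX A hA
  exact ⟨p, (mem_restrictTotalDegree _ _ _).2 hp.1, by simp [hp.evalOn_eq hA]⟩

lemma Indep.card_add_finrank_vanishSp {n : ℕ} {X : Finset (ℝ × ℝ)} (hX : Indep n X) :
    #X + finrank ℝ (vanishSp n X) = (n + 2).choose 2 := by
  let V := restrictTotalDegree (Fin 2) ℝ n
  have hrange : finrank ℝ (LinearMap.range ((evalOn X).domRestrict V)) = #X := by
    rw [LinearMap.range_domRestrict, hX.map_evalOn_eq_top, finrank_top,
      finrank_fintype_fun_eq_card, Fintype.card_coe]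
  have hker : finrank ℝ (LinearMap.ker ((evalOn X).domRestrict V)) = finrank ℝ (vanishSp n X) := by
    rw [vanishSp_eq_inf_ker, ← Submodule.map_comap_subtype, Submodule.finrank_map_subtype_eq,
      LinearMap.ker_domRestrict]
  rw [← hrange, ← hker, LinearMap.finrank_range_add_finrank_ker,
    finrank_restrictTotalDegree_fin_two]

lemma choose_two_le_finrank_vanishSp {m n : ℕ} {X : Finset (ℝ × ℝ)} {q : MvPolynomial (Fin 2) ℝ}
    (hq : q ≠ 0) (hdeg : q.totalDegree + m ≤ n) (hXq : ∀ A ∈ X, evalPt q A = 0) :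
    (m + 2).choose 2 ≤ finrank ℝ (vanishSp n X) := by
  have hle : (restrictTotalDegree (Fin 2) ℝ m).map (LinearMap.mulLeft ℝ q) ≤ vanishSp n X := by
    rintro _ ⟨r, hr, rfl⟩
    rw [SetLike.mem_coe, mem_restrictTotalDegree] at hr
    refine mem_vanishSp.2 ⟨(totalDegree_mul q r).trans (by omega), fun A hA => ?_⟩
    change evalPt (q * r) A = 0
    rw [evalPt, map_mul]
    exact mul_eq_zero_of_left (hXq A hA) _
  have : Module.Finite ℝ (vanishSp n X) :=
    Submodule.finiteDimensional_of_le (inf_le_left : vanishSp n X ≤ _)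
  calc (m + 2).choose 2 = finrank ℝ (restrictTotalDegree (Fin 2) ℝ m) :=
        (finrank_restrictTotalDegree_fin_two ℝ m).symm
    _ = finrank ℝ ((restrictTotalDegree (Fin 2) ℝ m).map (LinearMap.mulLeft ℝ q)) :=
        (Submodule.equivMapOfInjective _ (mul_right_injective₀ hq) _).finrank_eq
    _ ≤ finrank ℝ (vanishSp n X) := Submodule.finrank_mono hle

theorem stmt6 (n k : ℕ) (hk : k ≤ n) (q : MvPolynomial (Fin 2) ℝ)
    (hq : q.totalDegree = k) (hsf : Squarefree q)
    (X : Finset (ℝ × ℝ)) (hXq : ∀ A ∈ X, evalPt q A = 0)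
    (hcard : dd n k < X.card) :
    ¬ Indep n X := by
  intro hX
  have hq0 : q ≠ 0 := by
    rintro rfl
    exact not_squarefree_zero hsf
  have hsum := hX.card_add_finrank_vanishSp
  have hmul := choose_two_le_finrank_vanishSp (m := n - k) (n := n) hq0 (by omega) hXq
  have hdd := dd_add_choose_two hk
  omega
end

section
/- Let L be a finite set of lines in the plane and let S be a set of 2m points, each lying on some line of L and no point lying on two lines of L. Then S can be partitioned into m pairs with no pair contained in a single line of L if and only if every line of L contains at most m points of S. -/
open MvPolynomial
open scoped Classical

/-- A line in the plane, as the zero set of a nonzero degree-one polynomial. -/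
def IsLine (s : Set (ℝ × ℝ)) : Prop :=
  ∃ a b c : ℝ, (a, b) ≠ (0, 0) ∧ s = {P : ℝ × ℝ | a * P.1 + b * P.2 + c = 0}

lemma match_exists {α β : Type*} [DecidableEq α] (f : α → β) :
    ∀ m (S : Finset α), S.card = 2 * m →
      (∀ b : β, (S.filter (fun a => f a = b)).card ≤ m) →
      ∃ Pairs : Finset (Finset α),
        Pairs.card = m ∧ (∀ q ∈ Pairs, q.card = 2 ∧ q ⊆ S) ∧
        (∀ q₁ ∈ Pairs, ∀ q₂ ∈ Pairs, q₁ ≠ q₂ → Disjoint q₁ q₂) ∧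
        Pairs.biUnion id = S ∧
        (∀ q ∈ Pairs, ∃ x ∈ q, ∃ y ∈ q, f x ≠ f y) := by
  intro m
  induction m with
  | zero =>
    intro S hS _
    refine ⟨∅, by simp, by simp, by simp, ?_, by simp⟩
    simp [Finset.card_eq_zero.mp (by simpa using hS)]
  | succ m ih =>
    intro S hS hcl
    -- S nonempty
    have hSne : S.Nonempty := by
      rw [← Finset.card_pos, hS]; omega
    -- pick a largest color class
    have himg : (S.image f).Nonempty := hSne.image f
    obtain ⟨b, hbmem, hbmax⟩ := Finset.exists_max_image (S.image f)
      (fun b => (S.filter (fun a => f a = b)).card) himg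
    obtain ⟨x, hxS, hfx⟩ := Finset.mem_image.mp hbmem
    -- pick y with f y ≠ b
    have : (S.filter (fun a => f a ≠ b)).Nonempty := by
      rw [← Finset.card_pos]
      have h := Finset.card_filter_add_card_filter_not
        (s := S) (p := fun a => f a = b)
      have hb := hcl b
      simp only [ne_eq]
      omega
    obtain ⟨y, hy⟩ := this
    have hyS : y ∈ S := (Finset.mem_filter.mp hy).1
    have hfy : f y ≠ b := (Finset.mem_filter.mp hy).2
    have hxy : x ≠ y := fun h => hfy (h ▸ hfx)
    set S' := S \ {x, y} with hS'
    have hxyS : ({x, y} : Finset α) ⊆ S := by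
      intro a ha; rcases Finset.mem_insert.mp ha with h | h
      · exact h ▸ hxS
      · exact (Finset.mem_singleton.mp h) ▸ hyS
    have hcard2 : ({x, y} : Finset α).card = 2 := Finset.card_pair hxy
    have hS'card : S'.card = 2 * m := by
      rw [hS', Finset.card_sdiff_of_subset hxyS, hS, hcard2]; omega
    have hcl' : ∀ c : β, (S'.filter (fun a => f a = c)).card ≤ m := by
      intro c
      by_cases hc : c = b
      · -- f x = b, so class shrinks
        rw [hc]
        have hsub : S'.filter (fun a => f a = b) ⊆
            (S.filter (fun a => f a = b)).erase x := by
          intro a ha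
          simp only [hS', Finset.mem_filter, Finset.mem_sdiff, Finset.mem_insert,
            Finset.mem_singleton, Finset.mem_erase] at ha ⊢
          tauto
        have hxin : x ∈ S.filter (fun a => f a = b) := Finset.mem_filter.mpr ⟨hxS, hfx⟩
        calc (S'.filter (fun a => f a = b)).card
            ≤ ((S.filter (fun a => f a = b)).erase x).card := Finset.card_le_card hsub
          _ = (S.filter (fun a => f a = b)).card - 1 := Finset.card_erase_of_mem hxin
          _ ≤ m := by have := hcl b; omega
      · by_cases hcy : c = f y
        · subst hcy
          have hsub : S'.filter (fun a => f a = f y) ⊆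
              (S.filter (fun a => f a = f y)).erase y := by
            intro a ha
            simp only [hS', Finset.mem_filter, Finset.mem_sdiff, Finset.mem_insert,
              Finset.mem_singleton, Finset.mem_erase] at ha ⊢
            tauto
          have hyin : y ∈ S.filter (fun a => f a = f y) := by
            simp [hyS]
          calc (S'.filter (fun a => f a = f y)).card
              ≤ ((S.filter (fun a => f a = f y)).erase y).card := Finset.card_le_card hsub
            _ = (S.filter (fun a => f a = f y)).card - 1 := Finset.card_erase_of_mem hyin
            _ ≤ m := by have := hcl (f y); omega
        · -- class unchanged; show it was ≤ m
          have hsub : S'.filter (fun a => f a = c) = S.filter (fun a => f a = c) := by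
            apply Finset.ext; intro a
            simp only [hS', Finset.mem_filter, Finset.mem_sdiff, Finset.mem_insert,
              Finset.mem_singleton]
            constructor
            · tauto
            · rintro ⟨haS, hac⟩
              refine ⟨⟨haS, ?_⟩, hac⟩
              rintro (rfl | rfl)
              · exact hc (hac.symm.trans hfx)
              · exact hcy hac.symm
          rw [hsub]
          by_contra hbig
          push_neg at hbig
          -- c class has ≥ m+1, b class ≥ that by maximality of b (c ∈ image since class nonempty)
          have hcne : (S.filter (fun a => f a = c)).Nonempty := by
            rw [← Finset.card_pos]; omega
          obtain ⟨z, hz⟩ := hcne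
          have hzS := (Finset.mem_filter.mp hz).1
          have hcimg : c ∈ S.image f := Finset.mem_image.mpr ⟨z, hzS, (Finset.mem_filter.mp hz).2⟩
          have hble := hbmax c hcimg
          -- three disjoint classes: c, b, f y
          have hfyimg : f y ∈ S.image f := Finset.mem_image.mpr ⟨y, hyS, rfl⟩
          have h3 : (S.filter (fun a => f a = c)).card +
              (S.filter (fun a => f a = b)).card +
              (S.filter (fun a => f a = f y)).card ≤ S.card := by
            have := Finset.card_le_card (s := (S.filter (fun a => f a = c)) ∪
                (S.filter (fun a => f a = b)) ∪ (S.filter (fun a => f a = f y))) (t := S)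
              (by intro a ha
                  simp only [Finset.mem_union, Finset.mem_filter] at ha
                  tauto)
            have d1 : Disjoint (S.filter (fun a => f a = c)) (S.filter (fun a => f a = b)) := by
              rw [Finset.disjoint_left]
              intro a ha hb2
              simp only [Finset.mem_filter] at ha hb2
              exact hc (ha.2 ▸ hb2.2 ▸ rfl)
            have d2 : Disjoint ((S.filter (fun a => f a = c)) ∪ (S.filter (fun a => f a = b)))
                (S.filter (fun a => f a = f y)) := by
              rw [Finset.disjoint_left]
              intro a ha hb2
              simp only [Finset.mem_union, Finset.mem_filter] at ha hb2
              rcases ha with ha | ha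
              · exact hcy (ha.2 ▸ hb2.2 ▸ rfl)
              · exact hfy (hb2.2 ▸ ha.2 ▸ rfl)
            rwa [Finset.card_union_of_disjoint d2, Finset.card_union_of_disjoint d1] at this
          have hy1 : 0 < (S.filter (fun a => f a = f y)).card :=
            Finset.card_pos.mpr ⟨y, Finset.mem_filter.mpr ⟨hyS, rfl⟩⟩
          omega
    obtain ⟨Pairs', hP1, hP2, hP3, hP4, hP5⟩ := ih S' hS'card hcl'
    refine ⟨insert {x, y} Pairs', ?_, ?_, ?_, ?_, ?_⟩
    · rw [Finset.card_insert_of_notMem, hP1]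
      intro hmem
      have := (hP2 _ hmem).2
      have hx' : x ∈ S' := this (by simp)
      rw [hS', Finset.mem_sdiff] at hx'
      exact hx'.2 (by simp)
    · intro q hq
      rcases Finset.mem_insert.mp hq with rfl | hq'
      · exact ⟨hcard2, hxyS⟩
      · exact ⟨(hP2 q hq').1, (hP2 q hq').2.trans (Finset.sdiff_subset)⟩
    · intro q₁ hq₁ q₂ hq₂ hne
      rcases Finset.mem_insert.mp hq₁ with rfl | hq₁' <;>
        rcases Finset.mem_insert.mp hq₂ with rfl | hq₂'
      · exact absurd rfl hne
      · have := (hP2 _ hq₂').2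
        rw [Finset.disjoint_left]
        intro a ha ha2
        have := this ha2
        simp only [hS', Finset.mem_sdiff] at this
        exact this.2 ha
      · have := (hP2 _ hq₁').2
        rw [Finset.disjoint_right]
        intro a ha ha2
        have := this ha2
        simp only [hS', Finset.mem_sdiff] at this
        exact this.2 ha
      · exact hP3 _ hq₁' _ hq₂' hne
    · rw [Finset.biUnion_insert, hP4]
      simp only [id]
      rw [Finset.union_comm, hS', Finset.sdiff_union_of_subset hxyS]
    · intro q hq
      rcases Finset.mem_insert.mp hq with rfl | hq'
      · exact ⟨x, by simp, y, by simp, fun h => hfy (h ▸ hfx)⟩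
      · exact hP5 q hq'

theorem stmt16 (m : ℕ) (L : Finset (Set (ℝ × ℝ))) (hL : ∀ l ∈ L, IsLine l)
    (S : Finset (ℝ × ℝ)) (hScard : S.card = 2 * m)
    (hcover : ∀ P ∈ S, ∃ l ∈ L, P ∈ l)
    (hnodouble : ∀ P ∈ S, ∀ l₁ ∈ L, ∀ l₂ ∈ L, P ∈ l₁ → P ∈ l₂ → l₁ = l₂) :
    (∃ Pairs : Finset (Finset (ℝ × ℝ)),
        Pairs.card = m ∧ (∀ q ∈ Pairs, q.card = 2 ∧ q ⊆ S) ∧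
        (∀ q₁ ∈ Pairs, ∀ q₂ ∈ Pairs, q₁ ≠ q₂ → Disjoint q₁ q₂) ∧
        Pairs.biUnion id = S ∧
        (∀ q ∈ Pairs, ∀ l ∈ L, ¬ (↑q : Set (ℝ × ℝ)) ⊆ l)) ↔
      ∀ l ∈ L, (S.filter (· ∈ l)).card ≤ m := by
  constructor
  · rintro ⟨Pairs, hc, hq2, hdisj, hbi, hnl⟩ l hl
    have hfb : S.filter (· ∈ l) = Pairs.biUnion (fun q => q.filter (· ∈ l)) := by
      rw [← hbi, Finset.filter_biUnion]; rfl
    rw [hfb]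
    calc (Pairs.biUnion (fun q => q.filter (· ∈ l))).card
        ≤ ∑ q ∈ Pairs, (q.filter (· ∈ l)).card := Finset.card_biUnion_le
      _ ≤ ∑ q ∈ Pairs, 1 := by
          apply Finset.sum_le_sum
          intro q hq
          by_contra hbig
          push_neg at hbig
          have hsub : q.filter (· ∈ l) ⊆ q := Finset.filter_subset _ _
          have heq : q.filter (· ∈ l) = q := Finset.eq_of_subset_of_card_le hsub
            (by have := (hq2 q hq).1; have hle := Finset.card_le_card hsub; omega)
          apply hnl q hq l hl
          intro P hP
          have hPq : P ∈ q := by exact_mod_cast hP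
          rw [← heq] at hPq
          exact (Finset.mem_filter.mp hPq).2
      _ = m := by rw [Finset.sum_const, hc, smul_eq_mul, mul_one]
  · intro hcond
    set f : ℝ × ℝ → Set (ℝ × ℝ) := fun P =>
      if h : P ∈ S then (hcover P h).choose else ∅ with hf
    have hfL : ∀ P ∈ S, f P ∈ L := by
      intro P hP; simp only [hf, dif_pos hP]; exact (hcover P hP).choose_spec.1
    have hfmem : ∀ P ∈ S, P ∈ f P := by
      intro P hP; simp only [hf, dif_pos hP]; exact (hcover P hP).choose_spec.2
    have hclass : ∀ b : Set (ℝ × ℝ), (S.filter (fun a => f a = b)).card ≤ m := by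
      intro b
      rcases Finset.eq_empty_or_nonempty (S.filter (fun a => f a = b)) with he | ⟨P, hP⟩
      · simp [he]
      · have hPS := (Finset.mem_filter.mp hP).1
        have hPb := (Finset.mem_filter.mp hP).2
        have hbL : b ∈ L := hPb ▸ hfL P hPS
        have hsub : S.filter (fun a => f a = b) ⊆ S.filter (· ∈ b) := by
          intro a ha
          have h1 := (Finset.mem_filter.mp ha).1
          have h2 := (Finset.mem_filter.mp ha).2
          exact Finset.mem_filter.mpr ⟨h1, h2 ▸ hfmem a h1⟩
        exact (Finset.card_le_card hsub).trans (hcond b hbL)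
    obtain ⟨Pairs, h1, h2, h3, h4, h5⟩ := match_exists f m S hScard hclass
    refine ⟨Pairs, h1, h2, h3, h4, ?_⟩
    intro q hq l hl hsubl
    obtain ⟨x, hx, y, hy, hne⟩ := h5 q hq
    have hxS : x ∈ S := (h2 q hq).2 hx
    have hyS : y ∈ S := (h2 q hq).2 hy
    have hxl : x ∈ l := hsubl (by exact_mod_cast hx)
    have hyl : y ∈ l := hsubl (by exact_mod_cast hy)
    have e1 : l = f x := hnodouble x hxS l hl (f x) (hfL x hxS) hxl (hfmem x hxS)
    have e2 : l = f y := hnodouble y hyS l hl (f y) (hfL y hyS) hyl (hfmem y hyS)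
    exact hne (e1 ▸ e2)
end

section
/- Let X be an n-independent set of d(n,k−2)+2 points with k ≤ n−1, such that the space of polynomials of degree ≤ k vanishing on X has dimension at least 4. If additionally there exists a nonzero polynomial of degree ≤ k−1 vanishing on all of X, then all points of X except two lie on a maximal curve of degree k−2. -/
open MvPolynomial
open scoped Classical

/-
Independence of `X` turns dimension counts into point counts: if a space `V` of polynomials of
degree `≤ n` vanishes on `Y ⊆ X`, then `#Y + dim V ≤ dim Π_n`. For `V = h · Π_{n-m}` this says that
a curve of degree `m` holds at most `d(n,m)` nodes of `X`. Hence `q` has degree exactly `k - 1`,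
and since `dim Π_1 = 3 < 4`, one of the four given polynomials, `p`, is not divisible by `q`.
Write `p = g a`, `q = g b` with `a`, `b` coprime. The count applied to
`q Π_{n-k+1} + p Π_{n-deg p}`, whose summands meet in `g a b Π_{n-k+1-deg a}`, forces
`deg g = k - 2`. The curve `g = 0` then holds at most `d(n,k-2)` nodes, and the other nodes lie on
the line `b = 0` and on the coprime curve `a = 0` of degree `≤ 2`, where the same count leaves room
for at most two.
-/

open Finset Module

local notation "𝒫" => MvPolynomial (Fin 2) ℝ

def dimPoly (m : ℕ) : ℕ := (m + 1) * (m + 2) / 2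

lemma two_mul_dimPoly (m : ℕ) : 2 * dimPoly m = (m + 1) * (m + 2) :=
  Nat.mul_div_cancel' (Nat.even_mul_succ_self (m + 1)).two_dvd

lemma dimPoly_succ (m : ℕ) : dimPoly (m + 1) = dimPoly m + (m + 2) := by
  have h := two_mul_dimPoly m
  have h' := two_mul_dimPoly (m + 1)
  nlinarith

lemma one_le_dimPoly (m : ℕ) : 1 ≤ dimPoly m := by
  have := two_mul_dimPoly m
  nlinarith

lemma dimPoly_mono : Monotone dimPoly :=
  monotone_nat_of_le_succ fun m => by rw [dimPoly_succ]; omega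

lemma dd_add_dimPoly_sub {n j : ℕ} (h : j ≤ n) : dd n j + dimPoly (n - j) = dimPoly n := by
  obtain ⟨m, rfl⟩ := Nat.exists_eq_add_of_le' h
  have hdd : 2 * dd (m + j) j = j * (2 * m + j + 3) := by
    rw [dd, show 2 * (m + j) + 3 - j = 2 * m + j + 3 by omega]
    exact Nat.mul_div_cancel' (Nat.even_mul.mpr (by simp only [Nat.even_iff]; omega)).two_dvd
  have h1 := two_mul_dimPoly m
  have h2 := two_mul_dimPoly (m + j)
  rw [Nat.add_sub_cancel]
  nlinarith

lemma add_two_le_dimPoly {m : ℕ} (hm : 1 ≤ m) : m + 2 ≤ dimPoly m := by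
  have h := dimPoly_succ (m - 1)
  rw [Nat.sub_add_cancel hm] at h
  have := one_le_dimPoly (m - 1)
  omega

lemma dimPoly_add_le {j m : ℕ} (h : j + 2 ≤ m) : dimPoly j + 2 * m + 1 ≤ dimPoly m := by
  obtain ⟨i, rfl⟩ := Nat.exists_eq_add_of_le h
  have := dimPoly_mono (show j ≤ j + i by omega)
  have h1 := dimPoly_succ (j + i)
  have h2 := dimPoly_succ (j + i + 1)
  rw [show j + 2 + i = j + i + 1 + 1 by omega]
  omega

lemma dd_mono {n i j : ℕ} (hij : i ≤ j) (hj : j ≤ n) : dd n i ≤ dd n j := by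
  have hi := dd_add_dimPoly_sub (hij.trans hj)
  have hj := dd_add_dimPoly_sub hj
  have := dimPoly_mono (show n - j ≤ n - i by omega)
  omega

lemma card_finsupp_sum_le_fin_two (m : ℕ) :
    Nat.card {d : Fin 2 →₀ ℕ | (d.sum fun _ e => e) ≤ m} = dimPoly m := by
  let T : ℕ → Finset (ℕ × ℕ) := fun m => (range (m + 1)).biUnion antidiagonal
  have hT : ∀ m x, x ∈ T m ↔ x.1 + x.2 ≤ m := by
    intro m x
    simp only [T, mem_biUnion, mem_range, HasAntidiagonal.mem_antidiagonal]
    exact ⟨fun ⟨_, hi, h⟩ => by omega, fun h => ⟨x.1 + x.2, by omega, rfl⟩⟩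
  have hcard : ∀ m, #(T m) = dimPoly m := by
    intro m
    induction m with
    | zero => rfl
    | succ m ih =>
      have hsplit : T (m + 1) = T m ∪ antidiagonal (m + 1) := by
        ext x; simp only [mem_union, hT, HasAntidiagonal.mem_antidiagonal]; omega
      rw [hsplit, card_union_of_disjoint, ih, Nat.card_antidiagonal, dimPoly_succ]
      refine disjoint_left.mpr fun x h h' => ?_
      rw [hT] at h
      rw [HasAntidiagonal.mem_antidiagonal] at h'
      omega
  have e : {d : Fin 2 →₀ ℕ | (d.sum fun _ e => e) ≤ m} ≃ {x : ℕ × ℕ // x ∈ T m} := by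
    refine Equiv.subtypeEquiv (Finsupp.equivFunOnFinite.trans (finTwoArrowEquiv ℕ)) fun d => ?_
    rw [Set.mem_ofPred_eq, hT, Finsupp.sum_fintype _ _ fun _ => rfl, Fin.sum_univ_two]
    rfl
  rw [Nat.card_congr e, Nat.card_eq_finsetCard, hcard]

lemma finrank_restrictTotalDegree_fin_two_s17 (K : Type*) [CommRing K] [Nontrivial K] (m : ℕ) :
    finrank K (restrictTotalDegree (Fin 2) K m) = dimPoly m :=
  (Module.finrank_eq_nat_card_basis (basisRestrictSupport K _)).trans
    (card_finsupp_sum_le_fin_two m)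

lemma isUnit_of_totalDegree_eq_zero {σ K : Type*} [Field K] {b : MvPolynomial σ K} (hb : b ≠ 0)
    (h : b.totalDegree = 0) : IsUnit b := by
  rw [totalDegree_eq_zero_iff_eq_C] at h
  rw [h] at hb ⊢
  exact (isUnit_iff_ne_zero.mpr fun h0 => hb (by rw [h0, map_zero])).map _

lemma card_add_finrank_le_of_indep {n : ℕ} {X Y : Finset (ℝ × ℝ)} (hX : Indep n X) (hY : Y ⊆ X)
    {V : Submodule ℝ 𝒫} (hVn : V ≤ restrictTotalDegree (Fin 2) ℝ n)
    (hVY : ∀ p ∈ V, ∀ A ∈ Y, evalPt p A = 0) :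
    #Y + finrank ℝ V ≤ dimPoly n := by
  let S := restrictTotalDegree (Fin 2) ℝ n
  let ev : S →ₗ[ℝ] (Y → ℝ) :=
    LinearMap.pi fun A => (aeval ![A.1.1, A.1.2]).toLinearMap ∘ₗ S.subtype
  have hev : ∀ p A, ev p A = evalPt p A := fun _ _ => rfl
  -- the fundamental polynomials of the nodes of `Y` map onto the standard basis
  have hsurj : LinearMap.range ev = ⊤ := by
    rw [eq_top_iff, ← (Pi.basisFun ℝ Y).span_eq, Submodule.span_le]
    rintro _ ⟨A, rfl⟩
    obtain ⟨p, hpn, hpA, hpX⟩ := hX A (hY A.2)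
    refine ⟨⟨p, (mem_restrictTotalDegree _ _ _).2 hpn⟩, funext fun B => ?_⟩
    rw [hev, Pi.basisFun_apply, Pi.single_apply]
    split_ifs with h
    · rwa [h]
    · exact hpX B (hY B.2) (Subtype.coe_ne_coe.mpr h)
  have hker : V.comap S.subtype ≤ LinearMap.ker ev := by
    intro p hp
    rw [LinearMap.mem_ker]
    funext A
    rw [hev]
    exact hVY p hp A A.2
  have hrank := LinearMap.finrank_range_add_finrank_ker ev
  rw [hsurj, finrank_top, Module.finrank_fintype_fun_eq_card, Fintype.card_coe,
    finrank_restrictTotalDegree_fin_two_s17] at hrank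
  have hV := Submodule.finrank_mono hker
  rw [(Submodule.comapSubtypeEquivOfLe hVn).finrank_eq] at hV
  omega

noncomputable def multiples (g : 𝒫) (m : ℕ) : Submodule ℝ 𝒫 :=
  (restrictTotalDegree (Fin 2) ℝ m).map (LinearMap.mulLeft ℝ g)

instance (g : 𝒫) (m : ℕ) : FiniteDimensional ℝ (multiples g m) :=
  Module.Finite.map _ _

lemma mem_multiples {g x : 𝒫} {m : ℕ} :
    x ∈ multiples g m ↔ ∃ c : 𝒫, c.totalDegree ≤ m ∧ g * c = x := by
  simp only [multiples, Submodule.mem_map, mem_restrictTotalDegree,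
    LinearMap.mulLeft_apply]

lemma finrank_multiples {g : 𝒫} (hg : g ≠ 0) (m : ℕ) : finrank ℝ (multiples g m) = dimPoly m :=
  (LinearEquiv.finrank_eq (Submodule.equivMapOfInjective _
    (mul_right_injective₀ hg) _)).symm.trans (finrank_restrictTotalDegree_fin_two_s17 ℝ m)

lemma multiples_le_restrictTotalDegree {g : 𝒫} {m n : ℕ} (h : g.totalDegree + m ≤ n) :
    multiples g m ≤ restrictTotalDegree (Fin 2) ℝ n := by
  intro x hx
  obtain ⟨c, hc, rfl⟩ := mem_multiples.mp hx
  rw [mem_restrictTotalDegree]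
  exact (totalDegree_mul g c).trans (by omega)

lemma evalPt_mul (a b : 𝒫) (A : ℝ × ℝ) : evalPt (a * b) A = evalPt a A * evalPt b A :=
  map_mul _ a b

lemma evalPt_add (a b : 𝒫) (A : ℝ × ℝ) : evalPt (a + b) A = evalPt a A + evalPt b A :=
  map_add _ a b

lemma evalPt_eq_zero_of_mem_multiples {g x : 𝒫} {m : ℕ} (hx : x ∈ multiples g m) {A : ℝ × ℝ}
    (hA : evalPt g A = 0) : evalPt x A = 0 := by
  obtain ⟨c, -, rfl⟩ := mem_multiples.mp hx
  rw [evalPt_mul, hA, zero_mul]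

lemma card_filter_le_dd {n : ℕ} {X : Finset (ℝ × ℝ)} (hX : Indep n X) {h : 𝒫} (hh : h ≠ 0)
    (hn : h.totalDegree ≤ n) : #(X.filter fun A => evalPt h A = 0) ≤ dd n h.totalDegree := by
  have hb := card_add_finrank_le_of_indep hX (filter_subset _ X)
    (multiples_le_restrictTotalDegree (g := h) (m := n - h.totalDegree) (by omega))
    fun p hp A hA => evalPt_eq_zero_of_mem_multiples hp (mem_filter.mp hA).2
  rw [finrank_multiples hh, ← dd_add_dimPoly_sub hn] at hb
  omega

lemma card_add_dimPoly_add_dimPoly_le {n : ℕ} {X Y : Finset (ℝ × ℝ)} (hX : Indep n X)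
    (hY : Y ⊆ X) {p q : 𝒫} (hp : p ≠ 0) (hq : q ≠ 0) (hpn : p.totalDegree ≤ n)
    (hqn : q.totalDegree ≤ n) (hpY : ∀ A ∈ Y, evalPt p A = 0) (hqY : ∀ A ∈ Y, evalPt q A = 0) :
    #Y + dimPoly (n - q.totalDegree) + dimPoly (n - p.totalDegree) ≤ dimPoly n +
      finrank ℝ ↥(multiples q (n - q.totalDegree) ⊓ multiples p (n - p.totalDegree)) := by
  have hb := card_add_finrank_le_of_indep hX hY
    (sup_le (multiples_le_restrictTotalDegree (g := q) (m := n - q.totalDegree) (by omega))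
      (multiples_le_restrictTotalDegree (g := p) (m := n - p.totalDegree) (by omega)))
    fun f hf A hA => by
      obtain ⟨y, hy, z, hz, rfl⟩ := Submodule.mem_sup.mp hf
      rw [evalPt_add, evalPt_eq_zero_of_mem_multiples hy (hqY A hA),
        evalPt_eq_zero_of_mem_multiples hz (hpY A hA), add_zero]
  have hsum := Submodule.finrank_sup_add_finrank_inf_eq
    (multiples q (n - q.totalDegree)) (multiples p (n - p.totalDegree))
  rw [finrank_multiples hq, finrank_multiples hp] at hsum
  omega

lemma exists_eq_mul_of_mem_multiples_inf {g a b x : 𝒫} (hg : g ≠ 0) (hab : IsRelPrime a b)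
    {mq mp : ℕ} (hx : x ∈ multiples (g * b) mq ⊓ multiples (g * a) mp) :
    ∃ e : 𝒫, (a * e).totalDegree ≤ mq ∧ x = g * b * a * e := by
  obtain ⟨hxq, hxp⟩ := Submodule.mem_inf.mp hx
  obtain ⟨c, hc, rfl⟩ := mem_multiples.mp hxq
  obtain ⟨c', -, hcc'⟩ := mem_multiples.mp hxp
  have hbc : b * c = a * c' := mul_left_cancel₀ hg (by rw [← mul_assoc, ← mul_assoc, hcc'])
  obtain ⟨e, rfl⟩ := hab.dvd_of_dvd_mul_left ⟨c', hbc⟩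
  exact ⟨e, hc, by ring⟩

lemma finrank_multiples_inf_le {g a b : 𝒫} (hg : g ≠ 0) (ha : a ≠ 0) (hb : b ≠ 0)
    (hab : IsRelPrime a b) {mq mp : ℕ} (h : a.totalDegree ≤ mq) :
    finrank ℝ ↥(multiples (g * b) mq ⊓ multiples (g * a) mp) ≤ dimPoly (mq - a.totalDegree) := by
  refine (Submodule.finrank_mono fun x hx => ?_).trans
    (finrank_multiples (mul_ne_zero (mul_ne_zero hg hb) ha) _).le
  obtain ⟨e, he, rfl⟩ := exists_eq_mul_of_mem_multiples_inf hg hab hx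
  rcases eq_or_ne e 0 with rfl | he0
  · rw [mul_zero]
    exact Submodule.zero_mem _
  rw [totalDegree_mul_of_isDomain ha he0] at he
  exact mem_multiples.mpr ⟨e, by omega, rfl⟩

lemma multiples_inf_eq_bot {g a b : 𝒫} (hg : g ≠ 0) (hab : IsRelPrime a b) {mq mp : ℕ}
    (h : mq < a.totalDegree) : multiples (g * b) mq ⊓ multiples (g * a) mp = ⊥ := by
  refine (Submodule.eq_bot_iff _).mpr fun x hx => ?_
  obtain ⟨e, he, rfl⟩ := exists_eq_mul_of_mem_multiples_inf hg hab hx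
  have ha : a ≠ 0 := by rintro rfl; simp at h
  rcases eq_or_ne e 0 with rfl | he0
  · exact mul_zero _
  rw [totalDegree_mul_of_isDomain ha he0] at he
  omega

lemma card_le_dimPoly_of_linearIndependent {ι : Type*} [Fintype ι] {f : ι → 𝒫}
    (hf : LinearIndependent ℝ f) {q : 𝒫} (hq : q ≠ 0) {m : ℕ}
    (hdeg : ∀ i, (f i).totalDegree ≤ q.totalDegree + m) (hdvd : ∀ i, q ∣ f i) :
    Fintype.card ι ≤ dimPoly m := by
  have hmem : ∀ i, f i ∈ multiples q m := fun i => by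
    obtain ⟨c, hc⟩ := hdvd i
    have hc0 : c ≠ 0 := by rintro rfl; exact hf.ne_zero i (by rw [hc, mul_zero])
    have hi := hdeg i
    rw [hc, totalDegree_mul_of_isDomain hq hc0] at hi
    exact mem_multiples.mpr ⟨c, by omega, hc.symm⟩
  have hcard := (LinearIndependent.of_comp (multiples q m).subtype
    (v := fun i => (⟨f i, hmem i⟩ : multiples q m)) hf).fintype_card_le_finrank
  rwa [finrank_multiples hq] at hcard

lemma lt_totalDegree_of_dd_lt_card {n j : ℕ} {X : Finset (ℝ × ℝ)} (hX : Indep n X)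
    (hcard : dd n j < #X) (hj : j ≤ n) {h : 𝒫} (hh : h ≠ 0) (hn : h.totalDegree ≤ n)
    (hhX : ∀ A ∈ X, evalPt h A = 0) : j < h.totalDegree := by
  have hb := card_filter_le_dd hX hh hn
  rw [filter_true_of_mem hhX] at hb
  by_contra! hle
  exact absurd (hb.trans (dd_mono hle hj)) (by omega)

lemma card_le_totalDegree_of_totalDegree_eq_one {n : ℕ} {X Y : Finset (ℝ × ℝ)} (hX : Indep n X)
    (hY : Y ⊆ X) {a b : 𝒫} (ha : a ≠ 0) (hab : IsRelPrime a b) (hb : b.totalDegree = 1)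
    (han : a.totalDegree + 1 ≤ n) (haY : ∀ A ∈ Y, evalPt a A = 0)
    (hbY : ∀ A ∈ Y, evalPt b A = 0) : #Y ≤ a.totalDegree := by
  have hb0 : b ≠ 0 := by rintro rfl; simp at hb
  have hbound := card_add_dimPoly_add_dimPoly_le hX hY ha hb0 (by omega) (by omega) haY hbY
  have hinf := finrank_multiples_inf_le one_ne_zero ha hb0 hab (mq := n - b.totalDegree)
    (mp := n - a.totalDegree) (by omega)
  rw [one_mul, one_mul] at hinf
  have h1 := dimPoly_succ (n - 1)
  have h2 := dimPoly_succ (n - 1 - a.totalDegree)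
  rw [Nat.sub_add_cancel (by omega)] at h1
  rw [show n - 1 - a.totalDegree + 1 = n - a.totalDegree by omega] at h2
  rw [hb] at hbound hinf
  omega

lemma sub_two_le_totalDegree_of_common_factor {n k : ℕ} (hk : k + 1 ≤ n)
    {X : Finset (ℝ × ℝ)} (hX : Indep n X) (hcard : #X = dd n (k - 2) + 2) {g a b : 𝒫}
    (hg : g ≠ 0) (ha : a ≠ 0) (hb : b ≠ 0) (hab : IsRelPrime a b)
    (hqk : (g * b).totalDegree = k - 1) (hpk : (g * a).totalDegree ≤ k)
    (hpX : ∀ A ∈ X, evalPt (g * a) A = 0) (hqX : ∀ A ∈ X, evalPt (g * b) A = 0) :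
    k - 2 ≤ g.totalDegree := by
  by_contra! hs
  have hgb := totalDegree_mul_of_isDomain hg hb
  have hga := totalDegree_mul_of_isDomain hg ha
  have hp_gt := lt_totalDegree_of_dd_lt_card (j := k - 2) hX (by omega) (by omega)
    (mul_ne_zero hg ha) (by omega) hpX
  have hbound := card_add_dimPoly_add_dimPoly_le hX subset_rfl (mul_ne_zero hg ha)
    (mul_ne_zero hg hb) (by omega) (by omega) hpX hqX
  rw [hqk] at hbound
  have hdd := dd_add_dimPoly_sub (n := n) (j := k - 2) (by omega)
  have hstep := dimPoly_succ (n - (k - 1))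
  rw [show n - (k - 1) + 1 = n - (k - 2) by omega] at hstep
  rcases le_or_gt a.totalDegree (n - (k - 1)) with hle | hlt
  · have hinf := finrank_multiples_inf_le hg ha hb hab (mp := n - (g * a).totalDegree) hle
    have := dimPoly_add_le (j := n - (k - 1) - a.totalDegree)
      (m := n - (g * a).totalDegree) (by omega)
    omega
  · rw [multiples_inf_eq_bot hg hab hlt, finrank_bot] at hbound
    have := add_two_le_dimPoly (m := n - (g * a).totalDegree) (by omega)
    omega

lemma card_filter_eq_dd_of_common_factor {n k : ℕ} (hk : k + 1 ≤ n)
    (hk2 : 2 ≤ k) {X : Finset (ℝ × ℝ)} (hX : Indep n X) (hcard : #X = dd n (k - 2) + 2)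
    {g a b : 𝒫} (hg : g ≠ 0) (ha : a ≠ 0) (hab : IsRelPrime a b) (hgk : g.totalDegree = k - 2)
    (ha2 : a.totalDegree ≤ 2) (hb1 : b.totalDegree = 1)
    (hpX : ∀ A ∈ X, evalPt (g * a) A = 0) (hqX : ∀ A ∈ X, evalPt (g * b) A = 0) :
    #(X.filter fun A => evalPt g A = 0) = dd n (k - 2) := by
  have hoff : ∀ c : 𝒫, (∀ A ∈ X, evalPt (g * c) A = 0) →
      ∀ A ∈ X.filter (fun A => ¬ evalPt g A = 0), evalPt c A = 0 := by
    intro c hc A hA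
    rw [mem_filter] at hA
    have h := hc A hA.1
    rw [evalPt_mul, mul_eq_zero] at h
    exact h.resolve_left hA.2
  have hon := card_filter_le_dd hX hg (by omega)
  rw [hgk] at hon
  have hoff_card := card_le_totalDegree_of_totalDegree_eq_one hX (filter_subset _ X) ha hab hb1
    (by omega) (hoff a hpX) (hoff b hqX)
  have hsplit := card_filter_add_card_filter_not (s := X) (fun A => evalPt g A = 0)
  omega

theorem stmt17 (n k : ℕ) (hk : k + 1 ≤ n) (X : Finset (ℝ × ℝ))
    (hX : Indep n X) (hcard : X.card = dd n (k - 2) + 2)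
    (h4 : ∃ p : Fin 4 → MvPolynomial (Fin 2) ℝ, LinearIndependent ℝ p ∧
      ∀ i, (p i).totalDegree ≤ k ∧ ∀ A ∈ X, evalPt (p i) A = 0)
    (hq : ∃ q : MvPolynomial (Fin 2) ℝ, q ≠ 0 ∧ q.totalDegree ≤ k - 1 ∧
      ∀ A ∈ X, evalPt q A = 0) :
    ∃ μ : MvPolynomial (Fin 2) ℝ, μ.totalDegree = k - 2 ∧
      (X.filter (fun A => evalPt μ A = 0)).card = dd n (k - 2) := by
  obtain ⟨q, hq0, hqk, hqX⟩ := hq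
  have hq_gt := lt_totalDegree_of_dd_lt_card (j := k - 2) hX (by omega) (by omega) hq0 (by omega)
    hqX
  obtain ⟨f, hf, hfX⟩ := h4
  obtain ⟨i, hi⟩ : ∃ i, ¬ q ∣ f i := by
    by_contra! hdvd
    have hle := card_le_dimPoly_of_linearIndependent hf hq0 (m := 1)
      (fun i => by have := (hfX i).1; omega) hdvd
    simp [dimPoly] at hle
  obtain ⟨a, b, g, hab, hfi, rfl⟩ := UniqueFactorizationMonoid.exists_reduced_factors' (f i) q hq0
  obtain ⟨hpk, hpX⟩ := hfX i
  rw [← hfi] at hpk hpX hi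
  have hg : g ≠ 0 := left_ne_zero_of_mul hq0
  have ha : a ≠ 0 := right_ne_zero_of_mul (hfi ▸ hf.ne_zero i)
  have hb : b ≠ 0 := right_ne_zero_of_mul hq0
  have hb1 : b.totalDegree ≠ 0 := fun h0 =>
    hi (mul_dvd_mul_left g (isUnit_of_totalDegree_eq_zero hb h0).dvd)
  have hgk := sub_two_le_totalDegree_of_common_factor hk hX hcard hg ha hb hab (by omega) hpk
    hpX hqX
  have hgb := totalDegree_mul_of_isDomain hg hb
  have hga := totalDegree_mul_of_isDomain hg ha
  exact ⟨g, by omega, card_filter_eq_dd_of_common_factor hk (by omega) hX hcard hg ha hab (by omega)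
    (by omega) (by omega) hpX hqX⟩
end
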